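/- Let K be an algebraically closed field of characteristic 0, c ≥ 3 an integer, and A_c the explicit c×(2c+2) matrix of linear forms in x, y, t defined in the context. For each integer d ≥ −1 let μ_d : (S_d)^{2c+2} → (S_{d+1})^c be the K-linear map v ↦ A_c·v, where S_d is the degree-d part of S = K[x,y,t] (S_{−1} = 0). Then for every integer t ≥ −1, dim coker μ_t = max(0, c − 2(t+1)). (This combines Lemma 19 and the vanishing statements of Proposition 20: for the minimal-rank 1-type uniform bundle E_c of Example 9, h¹(E_c(t+1)) = max(0, h¹(E_c(t)) − 2) for all t ≥ −1 and h¹(E_c(−1)) = c; in particular for c odd h¹(E_c((c−3)/2)) = 1 and h¹(E_c(t)) = 0 for t > (c−3)/2, and for c even h¹(E_c((c−4)/2)) = 2 and h¹(E_c(t)) = 0 for t > (c−4)/2.) -/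

import Mathlib

/-!
Number the rows of `A_c` from `0` and write `e_r` for the unit vectors. Modulo the image of
`μ_n` one has `x e_r ≡ -t e_{r+2}`, `y e_r ≡ -t e_{r+1}` for `r ≥ 1`, and `y e_0 ≡ t e_0 ≡
t e_1 ≡ 0` (with `e_r = 0` for `r ≥ c`). Pushing the `x`'s and `y`'s into `t`'s reduces every
monomial vector of degree `n+1` to `0` or to `± t^{n+1} e_r` with `r ≥ 2n+2`, so these
`c - (2n+2)` vectors span the cokernel.

They are independent there: the substitution `x ↦ -s², y ↦ -s, t ↦ 1, e_r ↦ s^r` respects the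
relations except at the first two rows and past the last one, where the defect only involves
powers `s^k` with `k ≤ 2n+1` or `k ≥ c`. Hence the coefficients of `s^{2n+2}, …, s^{c-1}` are
functionals vanishing on the image, and they are dual to the vectors `t^{n+1} e_r`.
-/

open Matrix MvPolynomial

/-- Column index (1-based) of the `x` entry of row `j` of the matrix `A_c`:
`(p₁,p₂,p_j) = (1,4,2j+1)`. -/
def pcol (j : ℕ) : ℕ := if j = 1 then 1 else if j = 2 then 4 else 2 * j + 1

/-- Column index (1-based) of the `y` entry of row `j` of the matrix `A_c`:
`(q₁,q₂,q_j) = (2,5,2j+2)`. -/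
def qcol (j : ℕ) : ℕ := pcol j + 1

/-- The entry of the matrix `A_c` in (1-based) row `i` and column `j`, evaluated at
`(x, y, t) = (p 0, p 1, p 2)`. -/
def AcEnt {R : Type*} [CommRing R] (p : Fin 3 → R) (i j : ℕ) : R :=
  if i ≤ 2 then
    (if j = pcol i then p 0 else 0) + (if j = qcol i then p 1 else 0) +
      (if j = qcol i + 1 then p 2 else 0)
  else
    (if j = 2 * i + 1 then p 0 else 0) + (if j = 2 * i + 2 then p 1 else 0) +
      (if j = pcol (i - 2) then p 2 else 0) + (if j = qcol (i - 1) then p 2 else 0)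

/-- The explicit `c × (2c+2)` matrix `A_c` of Example 9, evaluated at
`(x, y, t) = (p 0, p 1, p 2)`. -/
def Ac {R : Type*} [CommRing R] (c : ℕ) (p : Fin 3 → R) :
    Matrix (Fin c) (Fin (2 * c + 2)) R :=
  fun i j => AcEnt p ((i : ℕ) + 1) ((j : ℕ) + 1)

/-- The matrix `A_c` as a matrix of linear forms over `S = K[x,y,t]`,
with `(x, y, t) = (X 0, X 1, X 2)`. -/
noncomputable def AcPoly (K : Type*) [Field K] (c : ℕ) :
    Matrix (Fin c) (Fin (2 * c + 2)) (MvPolynomial (Fin 3) K) :=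
  Ac c (fun k => MvPolynomial.X k)

/-- `(S_d)^x`, the space of `x`-tuples of homogeneous polynomials of degree `d` in
`S = K[x,y,t]`, with the convention `S_d = 0` for `d < 0`. -/
noncomputable def homogPi (K : Type*) [Field K] (x : ℕ) (d : ℤ) :
    Submodule K (Fin x → MvPolynomial (Fin 3) K) :=
  if 0 ≤ d then
    Submodule.pi Set.univ (fun _ => homogeneousSubmodule (Fin 3) K d.toNat)
  else ⊥

/-- `dim coker μ_d`, where `μ_d : (S_d)^{2c+2} → (S_{d+1})^c` is multiplication by the
matrix `A_c`; equivalently `h¹(E_c(d))` for the Steiner bundle `E_c` of Example 9. -/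
noncomputable def cokerDimAc (K : Type*) [Field K] (c : ℕ) (d : ℤ) : ℕ :=
  Module.finrank K (homogPi K c (d + 1)) -
    Module.finrank K
      (Submodule.map (LinearMap.restrictScalars K (AcPoly K c).mulVecLin)
        (homogPi K (2 * c + 2) d))


/-- The vector with `a` in row `r` (rows numbered from `0`); it is `0` when `r ≥ c`. -/
def vecAt {R : Type*} [Zero R] (c r : ℕ) (a : R) : Fin c → R :=
  fun i => if (i : ℕ) = r then a else 0

section vecAt
variable {R : Type*} [Zero R] {c : ℕ}

lemma vecAt_of_le {r : ℕ} (h : c ≤ r) (a : R) : vecAt c r a = 0 := by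
  funext i
  simp [vecAt, show (i : ℕ) ≠ r by omega]

lemma vecAt_zero (r : ℕ) : vecAt c r (0 : R) = 0 := by
  funext i
  simp [vecAt]

lemma vecAt_val (i : Fin c) (a : R) : vecAt c i a = Pi.single i a := by
  funext j
  simp [vecAt, Pi.single_apply, Fin.ext_iff]

end vecAt

lemma vecAt_mem_of_lt {S M : Type*} [Semiring S] [AddCommMonoid M] [Module S M] {c r : ℕ}
    {a : M} {P : Submodule S (Fin c → M)} (h : r < c → vecAt c r a ∈ P) : vecAt c r a ∈ P := by
  rcases lt_or_ge r c with hr | hr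
  · exact h hr
  · simp [vecAt_of_le hr]

lemma pcol_cases (r : ℕ) :
    (r = 1 ∧ pcol r = 1) ∨ (r = 2 ∧ pcol r = 4) ∨ (r ≠ 1 ∧ r ≠ 2 ∧ pcol r = 2 * r + 1) := by
  unfold pcol
  split_ifs <;> omega

lemma exists_col_eq (j : ℕ) :
    ∃ r, j + 1 = pcol (r + 1) ∨ j + 1 = qcol (r + 1) ∨ (r < 2 ∧ j + 1 = qcol (r + 1) + 1) := by
  refine ⟨if j < 3 then 0 else if j < 6 then 1 else (j - 2) / 2, ?_⟩
  unfold qcol pcol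
  split_ifs <;> omega

section columns
variable {R : Type*} [CommRing R] (p : Fin 3 → R)

lemma AcEnt_pcol {r i : ℕ} (hr : 1 ≤ r) (hi : 1 ≤ i) :
    AcEnt p i (pcol r) = (if i = r then p 0 else 0) + (if i = r + 2 then p 2 else 0) := by
  have := pcol_cases r; have := pcol_cases i; have := pcol_cases (i - 1)
  have := pcol_cases (i - 2)
  unfold AcEnt qcol
  generalize pcol r = a, pcol i = b, pcol (i - 1) = b₁, pcol (i - 2) = b₂ at *
  split_ifs <;> first | omega | simp

lemma AcEnt_qcol {r i : ℕ} (hr : 1 ≤ r) (hi : 1 ≤ i) :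
    AcEnt p i (qcol r) =
      (if i = r then p 1 else 0) + (if 2 ≤ r ∧ i = r + 1 then p 2 else 0) := by
  have := pcol_cases r; have := pcol_cases i; have := pcol_cases (i - 1)
  have := pcol_cases (i - 2)
  unfold AcEnt qcol
  generalize pcol r = a, pcol i = b, pcol (i - 1) = b₁, pcol (i - 2) = b₂ at *
  split_ifs <;> first | omega | simp

lemma AcEnt_qcol_add_one {r i : ℕ} (hr : 1 ≤ r) (hr2 : r ≤ 2) (hi : 1 ≤ i) :
    AcEnt p i (qcol r + 1) = if i = r then p 2 else 0 := by
  have := pcol_cases r; have := pcol_cases i; have := pcol_cases (i - 1)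
  have := pcol_cases (i - 2)
  unfold AcEnt qcol
  generalize pcol r = a, pcol i = b, pcol (i - 1) = b₁, pcol (i - 2) = b₂ at *
  split_ifs <;> first | omega | simp

-- `Ac` is indexed from `0`, while `AcEnt`, `pcol` and `qcol` count rows and columns from `1`.
variable {c r : ℕ} {col : Fin (2 * c + 2)}

lemma Ac_col_of_pcol (h : (col : ℕ) + 1 = pcol (r + 1)) :
    (fun i => Ac c p i col) = vecAt c r (p 0) + vecAt c (r + 2) (p 2) := by
  funext i
  simp [Ac, h, AcEnt_pcol, vecAt]

lemma Ac_col_of_qcol (h : (col : ℕ) + 1 = qcol (r + 1)) :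
    (fun i => Ac c p i col) = vecAt c r (p 1) + vecAt c (r + 1) (if r = 0 then 0 else p 2) := by
  funext i
  simp only [Ac, h, AcEnt_qcol p (Nat.le_add_left 1 r) (Nat.le_add_left 1 i), vecAt,
    Pi.add_apply]
  split_ifs <;> first | omega | simp

lemma Ac_col_of_qcol_add_one (hr : r < 2) (h : (col : ℕ) + 1 = qcol (r + 1) + 1) :
    (fun i => Ac c p i col) = vecAt c r (p 2) := by
  funext i
  simp [Ac, h, AcEnt_qcol_add_one p (Nat.le_add_left 1 r) hr, vecAt]

end columns

lemma Ac_map {R S : Type*} [CommRing R] [CommRing S] (f : R →+* S) (c : ℕ) (p : Fin 3 → R) :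
    (Ac c p).map f = Ac c (f ∘ p) := by
  ext i j
  simp only [Matrix.map_apply, Ac, AcEnt, Function.comp_apply]
  split_ifs <;> simp

lemma finrank_eq_finrank_add_card {K E ι : Type*} [Field K] [AddCommGroup E] [Module K E]
    [Fintype ι] [DecidableEq ι] {M V : Submodule K E} [FiniteDimensional K M] (b : ι → E)
    (f : E →ₗ[K] ι → K) (hM : M ≤ LinearMap.ker f) (hfb : ∀ i, f (b i) = Pi.single i 1)
    (hV : V = M ⊔ Submodule.span K (Set.range b)) :
    Module.finrank K V = Module.finrank K M + Fintype.card ι := by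
  have hf : ∀ a : ι → K, f (∑ i, a i • b i) = a := fun a => by
    simp only [map_sum, map_smul, hfb]
    exact (pi_eq_sum_univ' a).symm
  have hb : LinearIndependent K b := by
    refine LinearIndependent.of_comp f ?_
    convert (Pi.basisFun K ι).linearIndependent
    funext i
    simp [hfb]
  have hdisj : M ⊓ Submodule.span K (Set.range b) = ⊥ := by
    rw [Submodule.eq_bot_iff]
    rintro x ⟨hxM, hxb⟩
    obtain ⟨a, rfl⟩ := (Submodule.mem_span_range_iff_exists_fun K).1 hxb
    simp [(hf a).symm.trans (hM hxM)]
  have := FiniteDimensional.span_of_finite K (Set.finite_range b)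
  have := Submodule.finrank_sup_add_finrank_inf_eq M (Submodule.span K (Set.range b))
  rw [hdisj, finrank_bot, add_zero, finrank_span_eq_card hb] at this
  rw [hV, this]

section homogPi
variable {K : Type*} [Field K]

lemma homogPi_natCast (m d : ℕ) :
    homogPi K m d = Submodule.pi Set.univ fun _ => homogeneousSubmodule (Fin 3) K d := by
  simp [homogPi]

lemma mem_homogPi_natCast {m d : ℕ} {w : Fin m → MvPolynomial (Fin 3) K} :
    w ∈ homogPi K m d ↔ ∀ i, (w i).IsHomogeneous d := by
  simp [homogPi_natCast]

lemma finiteDimensional_homogPi (m d : ℕ) : FiniteDimensional K (homogPi K m d) := by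
  have := Module.Finite.iff_fg.mpr (homogeneousSubmodule_fg (Fin 3) K d)
  rw [homogPi_natCast, ← Submodule.iSup_map_single]
  infer_instance

lemma homogPi_le {m d : ℕ} {P : Submodule K (Fin m → MvPolynomial (Fin 3) K)}
    (h : ∀ (i : Fin m) (a b e : ℕ), a + b + e = d →
      Pi.single i (X 0 ^ a * X 1 ^ b * X 2 ^ e) ∈ P) :
    homogPi K m d ≤ P := by
  rw [homogPi_natCast, ← Submodule.iSup_map_single]
  refine iSup_le fun i => ?_
  rw [Submodule.map_le_iff_le_comap, homogeneousSubmodule_eq_finsupp_supported,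
    AddMonoidAlgebra.supported_eq_span_single, Submodule.span_le]
  rintro _ ⟨α, hα, rfl⟩
  have hα : α 0 + α 1 + α 2 = d := by
    simpa [Finsupp.degree_eq_sum, Fin.sum_univ_three] using hα
  simpa [MvPolynomial.single_eq_monomial, monomial_eq, Finsupp.prod_fintype, Fin.prod_univ_three]
    using h i _ _ _ hα

lemma isHomogeneous_X_pow_mul_X_pow_mul_X_pow (a b e : ℕ) :
    (X 0 ^ a * X 1 ^ b * X 2 ^ e : MvPolynomial (Fin 3) K).IsHomogeneous (a + b + e) :=
  ((isHomogeneous_X_pow _ _).mul (isHomogeneous_X_pow _ _)).mul (isHomogeneous_X_pow _ _)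

end homogPi

/-- The image of `μ_n`. -/
noncomputable def imageAc (K : Type*) [Field K] (c n : ℕ) :
    Submodule K (Fin c → MvPolynomial (Fin 3) K) :=
  Submodule.map (LinearMap.restrictScalars K (AcPoly K c).mulVecLin) (homogPi K (2 * c + 2) n)

noncomputable def tailVec (K : Type*) [Field K] (c m e : ℕ) :
    Fin (c - m) → Fin c → MvPolynomial (Fin 3) K :=
  fun k => vecAt c (m + k) (X 2 ^ e)

section image
variable {K : Type*} [Field K] {c n : ℕ}

lemma isHomogeneous_AcEnt_X (i j : ℕ) :
    (AcEnt (fun k => (X k : MvPolynomial (Fin 3) K)) i j).IsHomogeneous 1 := by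
  have hX : ∀ (P : Prop) [Decidable P] (k : Fin 3),
      (if P then (X k : MvPolynomial (Fin 3) K) else 0).IsHomogeneous 1 := fun P _ k => by
    split_ifs
    exacts [isHomogeneous_X _ _, isHomogeneous_zero _ _ _]
  by_cases h : i ≤ 2
  · rw [AcEnt, if_pos h]
    exact ((hX _ _).add (hX _ _)).add (hX _ _)
  · rw [AcEnt, if_neg h]
    exact (((hX _ _).add (hX _ _)).add (hX _ _)).add (hX _ _)

lemma imageAc_le_homogPi : imageAc K c n ≤ homogPi K c (n + 1 : ℕ) := by
  rintro _ ⟨v, hv, rfl⟩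
  refine mem_homogPi_natCast.2 fun i => ?_
  refine Submodule.sum_mem (homogeneousSubmodule (Fin 3) K (n + 1)) fun j _ => ?_
  exact add_comm 1 n ▸ (isHomogeneous_AcEnt_X _ _).mul (mem_homogPi_natCast.1 hv j)

lemma span_tailVec_le_homogPi (m e : ℕ) :
    Submodule.span K (Set.range (tailVec K c m e)) ≤ homogPi K c e := by
  rw [Submodule.span_le]
  rintro _ ⟨k, rfl⟩
  refine mem_homogPi_natCast.2 fun i => ?_
  simp only [tailVec, vecAt]
  split_ifs
  exacts [isHomogeneous_X_pow _ _, isHomogeneous_zero _ _ _]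

lemma mul_mem_imageAc_of_col_eq {col : Fin (2 * c + 2)} {v : Fin c → MvPolynomial (Fin 3) K}
    (hv : (fun i => AcPoly K c i col) = v) {g : MvPolynomial (Fin 3) K}
    (hg : g.IsHomogeneous n) :
    (fun i => v i * g) ∈ imageAc K c n := by
  refine ⟨Pi.single col g, mem_homogPi_natCast.2 fun j => ?_, ?_⟩
  · by_cases hj : j = col
    · simpa [hj] using hg
    · simpa [hj] using isHomogeneous_zero _ _ _
  · subst hv
    funext i
    simp [Matrix.mulVec_single]

variable {r : ℕ} {g : MvPolynomial (Fin 3) K}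

lemma vecAt_X0_add_vecAt_X2_mem (hr : r < c) (hg : g.IsHomogeneous n) :
    vecAt c r (X 0 * g) + vecAt c (r + 2) (X 2 * g) ∈ imageAc K c n := by
  have hcol : pcol (r + 1) - 1 < 2 * c + 2 := by have := pcol_cases (r + 1); omega
  convert mul_mem_imageAc_of_col_eq (Ac_col_of_pcol _ (r := r) (col := ⟨_, hcol⟩)
    (by have := pcol_cases (r + 1); dsimp only; omega)) hg using 1
  funext i
  simp only [vecAt, Pi.add_apply]
  split_ifs <;> ring

lemma vecAt_X1_add_vecAt_X2_mem (hr : r < c) (hg : g.IsHomogeneous n) :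
    vecAt c r (X 1 * g) + vecAt c (r + 1) (if r = 0 then 0 else X 2 * g) ∈ imageAc K c n := by
  have hcol : pcol (r + 1) < 2 * c + 2 := by have := pcol_cases (r + 1); omega
  convert mul_mem_imageAc_of_col_eq (Ac_col_of_qcol _ (col := ⟨_, hcol⟩) rfl) hg using 1
  funext i
  simp only [vecAt, Pi.add_apply]
  split_ifs <;> ring

lemma vecAt_X2_mem (hr : r < c) (hr2 : r < 2) (hg : g.IsHomogeneous n) : vecAt c r (X 2 * g) ∈ imageAc K c n := by
  have hcol : pcol (r + 1) + 1 < 2 * c + 2 := by have := pcol_cases (r + 1); omega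
  convert mul_mem_imageAc_of_col_eq (Ac_col_of_qcol_add_one _ hr2 (col := ⟨_, hcol⟩) rfl) hg
    using 1
  funext i
  simp only [vecAt]
  split_ifs <;> ring

end image

section spanning
variable {K : Type*} [Field K] {c n : ℕ}

lemma vecAt_X0_pow_mul_X2_pow_mem :
    ∀ e a r, r < 2 * e → a + e = n + 1 →
      vecAt c r (X 0 ^ a * X 2 ^ e : MvPolynomial (Fin 3) K) ∈ imageAc K c n
  | 0, _, _, hr, _ => absurd hr (by omega)
  | e + 1, a, r, hr, hdeg => vecAt_mem_of_lt fun hrc => by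
    have hg : (X 0 ^ a * X 2 ^ e : MvPolynomial (Fin 3) K).IsHomogeneous n :=
      (show a + e = n by omega) ▸ (isHomogeneous_X_pow _ _).mul (isHomogeneous_X_pow _ _)
    rcases lt_or_ge r 2 with hr2 | hr2
    · rw [show X 0 ^ a * X 2 ^ (e + 1) = X 2 * (X 0 ^ a * X 2 ^ e : MvPolynomial (Fin 3) K) by
        ring]
      exact vecAt_X2_mem hrc hr2 hg
    · obtain ⟨r, rfl⟩ : ∃ r', r = r' + 2 := ⟨r - 2, by omega⟩
      have hx := vecAt_X0_add_vecAt_X2_mem (c := c) (r := r) (by omega) hg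
      rw [show X 0 * (X 0 ^ a * X 2 ^ e) = (X 0 ^ (a + 1) * X 2 ^ e : MvPolynomial (Fin 3) K) by
          ring, show X 2 * (X 0 ^ a * X 2 ^ e) = (X 0 ^ a * X 2 ^ (e + 1) : MvPolynomial (Fin 3) K)
          by ring] at hx
      exact (Submodule.add_mem_iff_right _
        (vecAt_X0_pow_mul_X2_pow_mem e (a + 1) r (by omega) (by omega))).1 hx

lemma vecAt_monomial_mem :
    ∀ a b e r, a + b + e = n + 1 →
      vecAt c r (X 0 ^ a * X 1 ^ b * X 2 ^ e : MvPolynomial (Fin 3) K) ∈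
        imageAc K c n ⊔ Submodule.span K (Set.range (tailVec K c (2 * n + 2) (n + 1)))
  | a + 1, b, e, r, hdeg => vecAt_mem_of_lt fun hrc => by
    have hg : (X 0 ^ a * X 1 ^ b * X 2 ^ e : MvPolynomial (Fin 3) K).IsHomogeneous n :=
      (show a + b + e = n by omega) ▸ isHomogeneous_X_pow_mul_X_pow_mul_X_pow a b e
    have hx := vecAt_X0_add_vecAt_X2_mem hrc hg
    rw [show X 0 * (X 0 ^ a * X 1 ^ b * X 2 ^ e) =
        (X 0 ^ (a + 1) * X 1 ^ b * X 2 ^ e : MvPolynomial (Fin 3) K) by ring,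
      show X 2 * (X 0 ^ a * X 1 ^ b * X 2 ^ e) =
        (X 0 ^ a * X 1 ^ b * X 2 ^ (e + 1) : MvPolynomial (Fin 3) K) by ring] at hx
    exact (Submodule.add_mem_iff_left _ (vecAt_monomial_mem a b (e + 1) (r + 2) (by omega))).1
      (Submodule.mem_sup_left hx)
  | 0, b + 1, e, r, hdeg => vecAt_mem_of_lt fun hrc => by
    have hg : (X 0 ^ 0 * X 1 ^ b * X 2 ^ e : MvPolynomial (Fin 3) K).IsHomogeneous n :=
      (show 0 + b + e = n by omega) ▸ isHomogeneous_X_pow_mul_X_pow_mul_X_pow 0 b e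
    have hy := vecAt_X1_add_vecAt_X2_mem hrc hg
    rw [show X 1 * (X 0 ^ 0 * X 1 ^ b * X 2 ^ e) =
        (X 0 ^ 0 * X 1 ^ (b + 1) * X 2 ^ e : MvPolynomial (Fin 3) K) by ring,
      show X 2 * (X 0 ^ 0 * X 1 ^ b * X 2 ^ e) =
        (X 0 ^ 0 * X 1 ^ b * X 2 ^ (e + 1) : MvPolynomial (Fin 3) K) by ring] at hy
    rcases eq_or_ne r 0 with rfl | hr
    · simpa [vecAt_zero] using Submodule.mem_sup_left hy
    · rw [if_neg hr] at hy
      exact (Submodule.add_mem_iff_left _ (vecAt_monomial_mem 0 b (e + 1) (r + 1) (by omega))).1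
        (Submodule.mem_sup_left hy)
  | 0, 0, e, r, hdeg => by
    obtain rfl : e = n + 1 := by omega
    rcases lt_or_ge r (2 * n + 2) with hr | hr
    · simpa using
        Submodule.mem_sup_left (vecAt_X0_pow_mul_X2_pow_mem (n + 1) 0 r (by omega) (by omega))
    · refine vecAt_mem_of_lt fun hrc => Submodule.mem_sup_right
        (Submodule.subset_span ⟨⟨r - (2 * n + 2), by omega⟩, ?_⟩)
      simp [tailVec, show 2 * n + 2 + (r - (2 * n + 2)) = r by omega]

end spanning

noncomputable def cokerSubst (K : Type*) [Field K] : Fin 3 → Polynomial K :=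
  ![-Polynomial.X ^ 2, -Polynomial.X, 1]

noncomputable def powersX (K : Type*) [Field K] (c : ℕ) : Fin c → Polynomial K :=
  fun i => Polynomial.X ^ (i : ℕ)

noncomputable def weightPoly (K : Type*) [Field K] (c : ℕ) :
    (Fin c → MvPolynomial (Fin 3) K) →ₗ[K] Polynomial K :=
  ∑ i : Fin c, LinearMap.mulLeft K (Polynomial.X ^ (i : ℕ)) ∘ₗ
    (aeval (cokerSubst K)).toLinearMap ∘ₗ LinearMap.proj i

noncomputable def cokerFunctional (K : Type*) [Field K] (c m : ℕ) :
    (Fin c → MvPolynomial (Fin 3) K) →ₗ[K] Fin (c - m) → K :=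
  LinearMap.pi fun k => Polynomial.lcoeff K (m + k) ∘ₗ weightPoly K c

section functional
variable {K : Type*} [Field K] {c : ℕ}

lemma weightPoly_apply (w : Fin c → MvPolynomial (Fin 3) K) :
    weightPoly K c w = powersX K c ⬝ᵥ fun i => aeval (cokerSubst K) (w i) := by
  simp [weightPoly, powersX, dotProduct]

lemma powersX_dotProduct_vecAt (r : ℕ) (a : Polynomial K) :
    powersX K c ⬝ᵥ vecAt c r a = if r < c then Polynomial.X ^ r * a else 0 := by
  simp only [powersX, dotProduct, vecAt, mul_ite, mul_zero]
  rw [Fin.sum_univ_eq_sum_range (fun i => if i = r then Polynomial.X ^ i * a else 0),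
    Finset.sum_ite_eq']
  simp

lemma X_pow_dvd_powersX_dotProduct_vecAt_sub (r : ℕ) (a : Polynomial K) :
    Polynomial.X ^ c ∣ powersX K c ⬝ᵥ vecAt c r a - Polynomial.X ^ r * a := by
  rw [powersX_dotProduct_vecAt]
  split_ifs with h
  · simp
  · rw [zero_sub, dvd_neg]
    exact dvd_mul_of_dvd_left (pow_dvd_pow _ (not_lt.1 h)) a

/-- Modulo `s^c`, the columns `x e_r + t e_{r+2}` and `y e_r + t e_{r+1}` (`r ≥ 1`) are sent to
`0`, and the remaining columns `y e_0`, `t e_0`, `t e_1` to `-s`, `1`, `s`. -/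
lemma exists_natDegree_le_one_X_pow_dvd_vecMul_sub (j : Fin (2 * c + 2)) :
    ∃ low : Polynomial K, low.natDegree ≤ 1 ∧
      Polynomial.X ^ c ∣ (powersX K c ᵥ* Ac c (cokerSubst K)) j - low := by
  have hsum : ∀ (r s : ℕ) (a b : Polynomial K), Polynomial.X ^ c ∣
      powersX K c ⬝ᵥ (vecAt c r a + vecAt c s b) -
        (Polynomial.X ^ r * a + Polynomial.X ^ s * b) := fun r s a b => by
    rw [dotProduct_add, add_sub_add_comm]
    exact (X_pow_dvd_powersX_dotProduct_vecAt_sub r a).add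
      (X_pow_dvd_powersX_dotProduct_vecAt_sub s b)
  change ∃ low : Polynomial K, _ ∧ _ ∣ _ ⬝ᵥ (fun i => Ac c (cokerSubst K) i j) - low
  obtain ⟨r, h | h | ⟨hr, h⟩⟩ := exists_col_eq j
  · refine ⟨0, by simp, ?_⟩
    rw [Ac_col_of_pcol _ h]
    convert hsum r (r + 2) _ _ using 2
    simp only [cokerSubst, Matrix.cons_val_zero, Matrix.cons_val_two, Matrix.tail_cons,
      Matrix.head_cons]
    ring
  · rw [Ac_col_of_qcol _ h]
    refine ⟨_, ?_, hsum r (r + 1) _ _⟩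
    rcases eq_or_ne r 0 with rfl | hr
    · simp [cokerSubst]
    · simp [cokerSubst, hr, pow_succ]
  · rw [Ac_col_of_qcol_add_one _ hr h]
    refine ⟨Polynomial.X ^ r, by simpa using Nat.le_of_lt_succ hr, ?_⟩
    simpa [cokerSubst] using X_pow_dvd_powersX_dotProduct_vecAt_sub (c := c) r (1 : Polynomial K)

lemma natDegree_aeval_cokerSubst_le {g : MvPolynomial (Fin 3) K} {n : ℕ}
    (hg : g.IsHomogeneous n) : (aeval (cokerSubst K) g).natDegree ≤ n * 2 :=
  aeval_natDegree_le g hg.totalDegree_le _ fun i => by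
    fin_cases i <;> simp [cokerSubst, Polynomial.natDegree_neg]

lemma coeff_mul_eq_zero_of_X_pow_dvd_sub {ρ low u : Polynomial K} {n m : ℕ}
    (hlow : low.natDegree ≤ 1) (hρ : Polynomial.X ^ c ∣ ρ - low) (hu : u.natDegree ≤ n * 2)
    (hm : 2 * n + 2 ≤ m) (hmc : m < c) : (ρ * u).coeff m = 0 := by
  have hlow' : (low * u).coeff m = 0 :=
    Polynomial.coeff_eq_zero_of_natDegree_lt (Polynomial.natDegree_mul_le.trans_lt (by omega))
  have hrest : ((ρ - low) * u).coeff m = 0 :=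
    Polynomial.X_pow_dvd_iff.1 (dvd_mul_of_dvd_left hρ u) m hmc
  rwa [sub_mul, Polynomial.coeff_sub, hlow', sub_zero] at hrest

lemma imageAc_le_ker_cokerFunctional (n : ℕ) :
    imageAc K c n ≤ LinearMap.ker (cokerFunctional K c (2 * n + 2)) := by
  rintro _ ⟨v, hv, rfl⟩
  rw [LinearMap.mem_ker]
  funext k
  have hmap : (fun i => aeval (cokerSubst K) (((AcPoly K c).mulVec v) i)) =
      Ac c (cokerSubst K) *ᵥ fun j => aeval (cokerSubst K) (v j) := by
    funext i
    rw [← (aeval (cokerSubst K)).coe_toRingHom, RingHom.map_mulVec, AcPoly, Ac_map]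
    congr 2
    funext l
    simp
  simp only [cokerFunctional, LinearMap.pi_apply, LinearMap.comp_apply,
    LinearMap.restrictScalars_apply, Matrix.mulVecLin_apply, weightPoly_apply, hmap,
    Matrix.dotProduct_mulVec, Polynomial.lcoeff_apply, Pi.zero_apply]
  rw [dotProduct, Polynomial.finsetSum_coeff]
  refine Finset.sum_eq_zero fun j _ => ?_
  obtain ⟨low, hlow, hρ⟩ := exists_natDegree_le_one_X_pow_dvd_vecMul_sub (K := K) (c := c) j
  exact coeff_mul_eq_zero_of_X_pow_dvd_sub hlow hρ
    (natDegree_aeval_cokerSubst_le (mem_homogPi_natCast.1 hv j)) (by omega) (by omega)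

lemma cokerFunctional_tailVec (m e : ℕ) (k : Fin (c - m)) :
    cokerFunctional K c m (tailVec K c m e k) = Pi.single k 1 := by
  funext k'
  have hvec : (fun i => aeval (cokerSubst K) (tailVec K c m e k i)) = vecAt c (m + k) 1 := by
    funext i
    simp only [tailVec, vecAt]
    split_ifs <;> simp [cokerSubst]
  simp only [cokerFunctional, LinearMap.pi_apply, LinearMap.comp_apply, weightPoly_apply, hvec,
    powersX_dotProduct_vecAt, if_pos (show m + (k : ℕ) < c by omega), mul_one,
    Polynomial.lcoeff_apply, Polynomial.coeff_X_pow, Pi.single_apply]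
  simp [Fin.ext_iff, eq_comm]

end functional

section finrank
variable {K : Type*} [Field K]

lemma finrank_homogPi_succ (c n : ℕ) :
    Module.finrank K (homogPi K c (n + 1 : ℕ)) =
      Module.finrank K (imageAc K c n) + (c - (2 * n + 2)) := by
  have := finiteDimensional_homogPi (K := K) c (n + 1)
  have := Submodule.finiteDimensional_of_le (imageAc_le_homogPi (K := K) (c := c) (n := n))
  rw [← Fintype.card_fin (c - (2 * n + 2))]
  refine finrank_eq_finrank_add_card _ _ (imageAc_le_ker_cokerFunctional n)
    (cokerFunctional_tailVec _ (n + 1)) (le_antisymm ?_ ?_)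
  · refine homogPi_le fun i a b e h => ?_
    simpa [vecAt_val] using vecAt_monomial_mem (K := K) (c := c) a b e i h
  · exact sup_le imageAc_le_homogPi (span_tailVec_le_homogPi _ _)

lemma finrank_homogPi_zero (c : ℕ) : Module.finrank K (homogPi K c (0 : ℕ)) = c := by
  have := finrank_eq_finrank_add_card (M := ⊥) (V := homogPi K c (0 : ℕ)) (tailVec K c 0 0)
    (cokerFunctional K c 0) bot_le (cokerFunctional_tailVec 0 0) (le_antisymm ?_ ?_)
  · simpa using this
  · refine homogPi_le fun i a b e h => ?_
    obtain ⟨rfl, rfl, rfl⟩ : a = 0 ∧ b = 0 ∧ e = 0 := by omega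
    refine Submodule.mem_sup_right (Submodule.subset_span ⟨⟨i, by omega⟩, ?_⟩)
    simp [tailVec, vecAt_val]
  · exact sup_le bot_le (span_tailVec_le_homogPi _ _)

end finrank

theorem stmt12_general {K : Type*} [Field K] (c : ℕ) :
    ∀ t : ℤ, -1 ≤ t → (cokerDimAc K c t : ℤ) = max 0 ((c : ℤ) - 2 * (t + 1)) := by
  intro t ht
  obtain rfl | ⟨n, rfl⟩ : t = -1 ∨ ∃ n : ℕ, t = n := by
    rcases eq_or_lt_of_le ht with h | h
    exacts [Or.inl h.symm, Or.inr ⟨t.toNat, by omega⟩]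
  · have h0 : homogPi K (2 * c + 2) (-1) = ⊥ := by simp [homogPi]
    rw [cokerDimAc, h0, Submodule.map_bot, finrank_bot, show (-1 : ℤ) + 1 = (0 : ℕ) by rfl,
      finrank_homogPi_zero]
    simp
  · have h := finrank_homogPi_succ (K := K) c n
    rw [cokerDimAc, show (n : ℤ) + 1 = (n + 1 : ℕ) by push_cast; rfl]
    change ((Module.finrank K (homogPi K c (n + 1 : ℕ)) - Module.finrank K (imageAc K c n) : ℕ)
      : ℤ) = _
    omega

/-- **Lemma 19 and Proposition 20 (cohomology values).** For the minimal-rank 1-type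
uniform Steiner bundle `E_c` of Example 9 one has `h¹(E_c(t)) = max(0, c − 2(t+1))` for
every `t ≥ −1`; in particular `h¹(E_c(t+1)) = max(0, h¹(E_c(t)) − 2)`, and `h¹(E_c(t))`
vanishes exactly for `t > (c−3)/2` (`c` odd, with value 1 at `(c−3)/2`), resp.
`t > (c−4)/2` (`c` even, with value 2 at `(c−4)/2`). -/
theorem stmt12 {K : Type*} [Field K] [IsAlgClosed K] [CharZero K]
    (c : ℕ) (hc : 3 ≤ c) :
    ∀ t : ℤ, -1 ≤ t → (cokerDimAc K c t : ℤ) = max 0 ((c : ℤ) - 2 * (t + 1)) :=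
  stmt12_general c
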